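/- arXiv:1207.5010 — 2 statements merged into one kernel-verified Lean document; each statement's English description precedes it below -/
import Mathlib

section
/- Let N and m be positive integers, let A be an N×N Hermitian positive semidefinite complex matrix, let H be an N×m complex matrix of rank r, and let t > 0 be a real number. Then, as ρ → ∞, log det(I + A + ρ^t·H·Hᴴ) − log det(I + A) = rt·log ρ + O(1). (This is the prelog computation underlying the private-message rate bound in the achievability proof, where A = H21·H21ᴴ + H31·H31ᴴ, H = H11, t = 1 − α1, and r = M.) -/
open Matrix ComplexOrder

/-- Log-determinant of a complex matrix, as the real logarithm of the real part
of its determinant. -/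
noncomputable def logDet {N : ℕ} (A : Matrix (Fin N) (Fin N) ℂ) : ℝ :=
  Real.log A.det.re

/-!
With `P = 1 + A` positive definite, the matrix determinant lemma gives
`det (P + c H Hᴴ) = det P * det (1 + c G)` for `G = Hᴴ P⁻¹ H`, which is positive semidefinite of
rank `rank H = r`. Hence the difference of log-determinants is `∑ log (1 + c μᵢ)` over the
eigenvalues `μᵢ ≥ 0` of `G`. For `c ≥ 1` each nonzero eigenvalue contributes
`log c + log (c⁻¹ + μᵢ)`, and `log (c⁻¹ + μᵢ)` lies between `log μᵢ` and `log (1 + μᵢ)`;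
with `c = ρ ^ t` the `r` terms `log c` add up to `r t log ρ`.
-/

section LogBounds

open Real

lemma abs_log_one_add_mul_sub_log_le {μ c : ℝ} (hμ : 0 < μ) (hc : 1 ≤ c) :
    |log (1 + c * μ) - log c| ≤ |log μ| + |log (1 + μ)| := by
  have hc0 : 0 < c := one_pos.trans_le hc
  have hdiff : log (1 + c * μ) - log c = log (c⁻¹ + μ) := by
    rw [← log_div (by positivity) hc0.ne']
    congr 1
    field_simp
  have hlower : log μ ≤ log (c⁻¹ + μ) := log_le_log hμ (by linarith [inv_pos.2 hc0])
  have hupper : log (c⁻¹ + μ) ≤ log (1 + μ) :=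
    log_le_log (by positivity) (by linarith [inv_le_one_of_one_le₀ hc])
  rw [hdiff, abs_le]
  constructor <;> linarith [neg_abs_le (log μ), le_abs_self (log (1 + μ)), abs_nonneg (log μ),
    abs_nonneg (log (1 + μ))]

lemma abs_sum_log_one_add_mul_sub_le {ι : Type*} [Fintype ι] {μ : ι → ℝ} (hμ : ∀ i, 0 ≤ μ i)
    {c : ℝ} (hc : 1 ≤ c) :
    |∑ i, log (1 + c * μ i) - Fintype.card {i // μ i ≠ 0} * log c|
      ≤ ∑ i, (|log (μ i)| + |log (1 + μ i)|) := by
  classical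
  have hcard : (Fintype.card {i // μ i ≠ 0} : ℝ) * log c = ∑ i, if μ i ≠ 0 then log c else 0 := by
    rw [Finset.sum_ite, Finset.sum_const_zero, add_zero, Finset.sum_const, nsmul_eq_mul,
      Fintype.card_subtype]
  rw [hcard, ← Finset.sum_sub_distrib]
  refine (Finset.abs_sum_le_sum_abs _ _).trans (Finset.sum_le_sum fun i _ => ?_)
  by_cases hi : μ i = 0
  · simp [hi]
  · rw [if_pos hi]
    exact abs_log_one_add_mul_sub_log_le ((hμ i).lt_of_ne' hi) hc

end LogBounds

namespace Matrix

lemma det_add_smul_mul {m n α R : Type*} [Fintype m] [DecidableEq m] [Fintype n] [DecidableEq n]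
    [CommRing α] [Monoid R] [DistribMulAction R α] [IsScalarTower R α α] [SMulCommClass R α α]
    {P : Matrix m m α} (hP : IsUnit P.det) (U : Matrix m n α) (V : Matrix n m α) (c : R) :
    (P + c • (U * V)).det = P.det * (1 + c • (V * P⁻¹ * U)).det := by
  rw [← Matrix.smul_mul, det_add_mul _ _ hP, Matrix.mul_smul]

variable {n m 𝕜 : Type*} [Fintype n] [DecidableEq n] [Fintype m] [RCLike 𝕜]

lemma PosDef.rank_conjTranspose_mul_mul {Q : Matrix n n 𝕜} (hQ : Q.PosDef) (H : Matrix n m 𝕜) :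
    (Hᴴ * Q * H).rank = H.rank := by
  open scoped MatrixOrder in
  obtain ⟨B, hB, rfl⟩ := CStarAlgebra.isStrictlyPositive_iff_eq_star_mul_self.mp
    hQ.isStrictlyPositive
  rw [star_eq_conjTranspose, ← Matrix.mul_assoc, Matrix.mul_assoc, ← conjTranspose_mul,
    rank_conjTranspose_mul_self,
    rank_mul_eq_right_of_isUnit_det B H ((isUnit_iff_isUnit_det B).mp hB)]

lemma IsHermitian.det_one_add_smul {G : Matrix n n 𝕜} (hG : G.IsHermitian) (c : ℝ) :
    (1 + c • G).det = ∏ i, ((1 + c * hG.eigenvalues i : ℝ) : 𝕜) := by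
  have hcfc : 1 + c • G = cfc (fun x : ℝ => 1 + c * x) G := by
    rw [cfc_add .., cfc_const_one .., cfc_const_mul .., cfc_id' ..]
  rw [hcfc, hG.cfc_eq]
  simp [IsHermitian.cfc, -Unitary.conjStarAlgAut_apply]

end Matrix

lemma logDet_add_smul_mul_conjTranspose {N m : ℕ} {P : Matrix (Fin N) (Fin N) ℂ} (hP : P.PosDef)
    {H : Matrix (Fin N) (Fin m) ℂ} (hG : (Hᴴ * P⁻¹ * H).PosSemidef) {c : ℝ} (hc : 0 ≤ c) :
    logDet (P + c • (H * Hᴴ))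
      = logDet P + ∑ i, Real.log (1 + c * hG.isHermitian.eigenvalues i) := by
  have hfactor_pos : ∀ i, 0 < 1 + c * hG.isHermitian.eigenvalues i := fun i => by
    nlinarith [hG.eigenvalues_nonneg i]
  have hdetP : 0 < P.det.re := (Complex.pos_iff.mp hP.det_pos).1
  rw [logDet, det_add_smul_mul hP.det_pos.ne'.isUnit, hG.isHermitian.det_one_add_smul,
    ← RCLike.ofReal_prod, ← RCLike.re_to_complex, RCLike.re_mul_ofReal, RCLike.re_to_complex,
    Real.log_mul hdetP.ne' (Finset.prod_pos fun i _ => hfactor_pos i).ne',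
    Real.log_prod fun i _ => (hfactor_pos i).ne', logDet]

theorem logdet_shifted_prelog_general (N m : ℕ)
    (A : Matrix (Fin N) (Fin N) ℂ) (hA : A.PosSemidef)
    (H : Matrix (Fin N) (Fin m) ℂ) (r : ℕ) (hr : H.rank = r)
    (t : ℝ) (ht : 0 < t) :
    ∃ C > (0 : ℝ), ∃ ρ₀ > (0 : ℝ), ∀ ρ ≥ ρ₀,
      |(logDet (1 + A + (ρ ^ t : ℝ) • (H * Hᴴ)) - logDet (1 + A))
        - (r : ℝ) * t * Real.log ρ| ≤ C := by
  have hP : (1 + A).PosDef := PosDef.one.add_posSemidef hA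
  have hG : (Hᴴ * (1 + A)⁻¹ * H).PosSemidef := hP.inv.posSemidef.conjTranspose_mul_mul_same H
  set μ := hG.isHermitian.eigenvalues
  have hcard : Fintype.card {i // μ i ≠ 0} = r := by
    rw [← hG.isHermitian.rank_eq_card_non_zero_eigs, hP.inv.rank_conjTranspose_mul_mul, hr]
  refine ⟨∑ i, (|Real.log (μ i)| + |Real.log (1 + μ i)|) + 1, by positivity, 1, one_pos,
    fun ρ hρ => ?_⟩
  have hc : 1 ≤ ρ ^ t := Real.one_le_rpow hρ ht.le
  rw [logDet_add_smul_mul_conjTranspose hP hG (zero_le_one.trans hc), add_sub_cancel_left,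
    mul_assoc, ← Real.log_rpow (one_pos.trans_le hρ), ← hcard]
  linarith [abs_sum_log_one_add_mul_sub_le hG.eigenvalues_nonneg hc]

/-- Prelog computation underlying the private-message rate bound:
for a Hermitian positive semidefinite `A`, an `N × m` matrix `H` of rank `r`,
and `t > 0`, `log det(I + A + ρ^t H Hᴴ) − log det(I + A) = rt log ρ + O(1)`
as `ρ → ∞`. -/
theorem logdet_shifted_prelog (N m : ℕ) (hN : 0 < N) (hm : 0 < m)
    (A : Matrix (Fin N) (Fin N) ℂ) (hA : A.PosSemidef)
    (H : Matrix (Fin N) (Fin m) ℂ) (r : ℕ) (hr : H.rank = r)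
    (t : ℝ) (ht : 0 < t) :
    ∃ C > (0 : ℝ), ∃ ρ₀ > (0 : ℝ), ∀ ρ ≥ ρ₀,
      |(logDet (1 + A + (ρ ^ t : ℝ) • (H * Hᴴ)) - logDet (1 + A))
        - (r : ℝ) * t * Real.log ρ| ≤ C :=
  logdet_shifted_prelog_general N m A hA H r hr t ht
end

section
/- Let M = 1 and N = 2. For all real α1, α2 with 0 < α2 < α1 < 1, the weak-interference GDOF expression satisfies D_w(α1, α2) ≥ 2/3 (the generalized degrees of freedom achieved by an orthogonal scheme), and equality holds at (α1, α2) = (2/3, 1/3), i.e., D_w(2/3, 1/3) = 2/3. -/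
/-!
For `M = 1, N = 2` the three arguments of the first `max` in `Dw` sum to `2` and the two
arguments of the second sum to `3/2`, so these maxima are at least their averages `2/3` and `3/4`;
the last term `1 - α2/3` is at least `2/3` as soon as `α2 ≤ 1`. At `(2/3, 1/3)` all three
arguments of the first `max` equal `2/3`.
-/

/-- Weak-interference GDOF expression for the 3-user M×N partially asymmetric
MIMO Gaussian interference channel with cross-link exponents 0 < α2 < α1 < 1. -/
noncomputable def Dw (M N : ℕ) (α1 α2 : ℝ) : ℝ :=
  min
    (min
      (max (M + ((N : ℝ) - 3 * M) * α2)
        (max (M + ((N : ℝ) - 3 * M) * α1 + (3 * (M : ℝ) - N) * α2)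
          ((3 * (M : ℝ) - N) * α1 + N - 2 * M)))
      (max (M + (1 / 2) * ((N : ℝ) - 3 * M) * α2)
        ((1 / 2) * ((N : ℝ) - M) + (1 / 2) * (3 * (M : ℝ) - N) * α2)))
    (M + (1 / 3) * ((N : ℝ) - 3 * M) * α2)

section

variable {α : Type*} [Field α] [LinearOrder α] [IsStrictOrderedRing α]

theorem le_max_of_add_eq_two_mul {x y c : α} (h : x + y = 2 * c) : c ≤ max x y := by
  by_contra! hlt
  rw [max_lt_iff] at hlt
  linarith [hlt.1, hlt.2]

theorem le_max_max_of_add_eq_three_mul {x y z c : α} (h : x + y + z = 3 * c) :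
    c ≤ max x (max y z) := by
  by_contra! hlt
  simp only [max_lt_iff] at hlt
  linarith [hlt.1, hlt.2.1, hlt.2.2]

end

theorem Dw_one_two (α1 α2 : ℝ) :
    Dw 1 2 α1 α2 =
      min (min (max (1 - α2) (max (1 - α1 + α2) α1)) (max (1 - α2 / 2) (1 / 2 + α2 / 2)))
        (1 - α2 / 3) := by
  unfold Dw
  norm_num
  ring_nf

/-- For the 3-user 1×2 channel in the weak-interference regime, the GDOF is at
least 2/3 (achieved by an orthogonal scheme), with equality at
(α1, α2) = (2/3, 1/3). -/
theorem Dw_ge_orthogonal_one_two :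
    (∀ α1 α2 : ℝ, 0 < α2 → α2 < α1 → α1 < 1 → Dw 1 2 α1 α2 ≥ 2 / 3) ∧
      Dw 1 2 (2 / 3) (1 / 3) = 2 / 3 := by
  constructor
  · intro α1 α2 _ h21 h1
    rw [Dw_one_two]
    refine le_min (le_min ?_ ?_) ?_
    · exact le_max_max_of_add_eq_three_mul (by ring)
    · exact (by norm_num : (2 / 3 : ℝ) ≤ 3 / 4).trans (le_max_of_add_eq_two_mul (by ring))
    · linarith
  · rw [Dw_one_two]
    norm_num
end
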